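/- Let D be a digraph and let R, R′ be a ray and a reverse ray in D that are equivalent (there are infinitely many disjoint paths from R to R′ and from R′ to R). Then R is solid in D: for every finite vertex set X ⊆ V(D), R has a tail contained in a single strong component of D − X; moreover this strong component also contains a tail of R′. -/

import Mathlib

variable {V : Type*}

/-- Reachability from `a` to `b` by a directed walk staying inside the vertex set `S`. -/
def ReachIn (D : V → V → Prop) (S : Set V) (a b : V) : Prop :=
  a ∈ S ∧ b ∈ S ∧ Relation.ReflTransGen (fun x y => y ∈ S ∧ D x y) a b

/-- `C` is a strong component of the subdigraph of `D` induced on `S`. -/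
def IsSCCIn (D : V → V → Prop) (S : Set V) (C : Set V) : Prop :=
  ∃ a ∈ S, C = {b | ReachIn D S a b ∧ ReachIn D S b a}

/-- A directed ray in `D`. -/
def IsRay (D : V → V → Prop) (R : ℕ → V) : Prop :=
  Function.Injective R ∧ ∀ n, D (R n) (R (n + 1))

/-- A reverse directed ray in `D`. -/
def IsRevRay (D : V → V → Prop) (R : ℕ → V) : Prop :=
  Function.Injective R ∧ ∀ n, D (R (n + 1)) (R n)

/-- The ray `R` has a tail inside the vertex set `C`. -/
def HasTailIn (R : ℕ → V) (C : Set V) : Prop :=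
  ∃ n, ∀ m, n ≤ m → R m ∈ C

/-- A solid ray: for every finite `X` it has a tail in some strong component of `D − X`. -/
def Solid (D : V → V → Prop) (R : ℕ → V) : Prop :=
  IsRay D R ∧ ∀ X : Finset V, ∃ C, IsSCCIn D ((↑X : Set V)ᶜ) C ∧ HasTailIn R C

/-- Two solid rays are end-equivalent: for every finite `X` they have tails in the same
strong component of `D − X`. -/
def EndEquiv (D : V → V → Prop) (R R' : ℕ → V) : Prop :=
  ∀ X : Finset V, ∃ C, IsSCCIn D ((↑X : Set V)ᶜ) C ∧ HasTailIn R C ∧ HasTailIn R' C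

/-- `Ω` is an end of `D`: the class of solid rays equivalent to some solid ray. -/
def IsEnd (D : V → V → Prop) (Ω : Set (ℕ → V)) : Prop :=
  ∃ R, Solid D R ∧ Ω = {R' | Solid D R' ∧ EndEquiv D R R'}

/-- A (nonempty) directed path, recorded as its list of vertices. -/
def IsPathList (D : V → V → Prop) (l : List V) : Prop :=
  l ≠ [] ∧ l.Nodup ∧ l.Chain' D

/-- Infinitely many pairwise disjoint `A`–`B` paths in `D` (each meeting `A` precisely in its
first vertex and `B` precisely in its last vertex). -/
def DisjointPathsFrom (D : V → V → Prop) (A B : Set V) : Prop :=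
  ∃ P : ℕ → List V,
    (∀ k, IsPathList D (P k)) ∧
    (∀ j k, j ≠ k → ∀ x ∈ P j, x ∉ P k) ∧
    (∀ k, ∃ a, (P k).head? = some a ∧ a ∈ A) ∧
    (∀ k, ∃ b, (P k).getLast? = some b ∧ b ∈ B) ∧
    (∀ k, ∀ x ∈ (P k).tail, x ∉ A) ∧
    (∀ k, ∀ x ∈ (P k).dropLast, x ∉ B)

/-- A necklace in `D`: an inflated symmetric ray with finite branch sets (beads), given by its
beads together with the connecting (subdividing) paths in both directions. -/
structure Necklace (D : V → V → Prop) where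
  bead : ℕ → Set V
  fwd : ℕ → List V
  bwd : ℕ → List V
  bead_fin : ∀ n, (bead n).Finite
  bead_nonempty : ∀ n, (bead n).Nonempty
  bead_disj : ∀ m n, m ≠ n → Disjoint (bead m) (bead n)
  bead_strong : ∀ n, ∀ a ∈ bead n, ∀ b ∈ bead n, ReachIn D (bead n) a b
  fwd_path : ∀ n, IsPathList D (fwd n)
  bwd_path : ∀ n, IsPathList D (bwd n)
  fwd_head : ∀ n a, (fwd n).head? = some a → a ∈ bead n
  fwd_last : ∀ n b, (fwd n).getLast? = some b → b ∈ bead (n + 1)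
  bwd_head : ∀ n a, (bwd n).head? = some a → a ∈ bead (n + 1)
  bwd_last : ∀ n b, (bwd n).getLast? = some b → b ∈ bead n
  fwd_inner : ∀ n, ∀ x ∈ (fwd n).tail.dropLast, ∀ m, x ∉ bead m
  bwd_inner : ∀ n, ∀ x ∈ (bwd n).tail.dropLast, ∀ m, x ∉ bead m
  fwd_fwd_disj : ∀ m n, m ≠ n → ∀ x ∈ (fwd m).tail.dropLast, x ∉ (fwd n).tail.dropLast
  bwd_bwd_disj : ∀ m n, m ≠ n → ∀ x ∈ (bwd m).tail.dropLast, x ∉ (bwd n).tail.dropLast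
  fwd_bwd_disj : ∀ m n, ∀ x ∈ (fwd m).tail.dropLast, x ∉ (bwd n).tail.dropLast

/-- The vertex set of a necklace. -/
def Necklace.verts {D : V → V → Prop} (N : Necklace D) : Set V :=
  (⋃ n, N.bead n) ∪ {x | ∃ n, x ∈ N.fwd n ∨ x ∈ N.bwd n}

/-- A necklace is attached to `𝒰` if infinitely many of its beads meet every set in `𝒰`. -/
def Necklace.AttachedTo {D : V → V → Prop} (N : Necklace D) (𝒰 : Finset (Set V)) : Prop :=
  {n | ∀ U ∈ 𝒰, (N.bead n ∩ U).Nonempty}.Infinite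

/-- A necklace represents the end of the solid ray `R`: for every finite `X`, all but finitely
many beads lie in the strong component of `D − X` in which `R` has a tail. -/
def NecklaceRepresents {D : V → V → Prop} (N : Necklace D) (R : ℕ → V) : Prop :=
  ∀ X : Finset V, ∃ C, IsSCCIn D ((↑X : Set V)ᶜ) C ∧ HasTailIn R C ∧
    ∃ n₀, ∀ n, n₀ ≤ n → N.bead n ⊆ C

/-- `URankLE D 𝒰 S α`: the subdigraph of `D` induced on `S` has `𝒰`-rank at most `α`. -/
inductive URankLE (D : V → V → Prop) (𝒰 : Finset (Set V)) : Set V → Ordinal → Prop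
  | base (S : Set V) (α : Ordinal) (U : Set V) (hU : U ∈ 𝒰) (h : (U ∩ S).Finite) :
      URankLE D 𝒰 S α
  | step (S : Set V) (α : Ordinal) (X : Finset V) (r : Set V → Ordinal)
      (hr : ∀ C, IsSCCIn D (S \ ↑X) C → r C < α)
      (h : ∀ C, IsSCCIn D (S \ ↑X) C → URankLE D 𝒰 C (r C)) :
      URankLE D 𝒰 S α

/-- `D` (induced on `S`) has `𝒰`-rank exactly `α`. -/
def HasURank (D : V → V → Prop) (𝒰 : Finset (Set V)) (S : Set V) (α : Ordinal) : Prop :=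
  URankLE D 𝒰 S α ∧ ∀ β < α, ¬ URankLE D 𝒰 S β

/-- A vertex-direction of `D`. -/
def IsVertexDirection (D : V → V → Prop) (f : Finset V → Set V) : Prop :=
  (∀ X : Finset V, IsSCCIn D ((↑X : Set V)ᶜ) (f X)) ∧
  ∀ X Y : Finset V, X ⊆ Y → f Y ⊆ f X

/-- A separation `(A,B)` of `D`: `A ∪ B = V(D)` and no edge from `B∖A` to `A∖B`. -/
def IsSep (D : V → V → Prop) (A B : Set V) : Prop :=
  A ∪ B = Set.univ ∧ ∀ a ∈ B \ A, ∀ b ∈ A \ B, ¬ D a b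

/-- A finite order separation `(A,B)` points towards the vertex-direction `f`. -/
def PointsTowards (D : V → V → Prop) (f : Finset V → Set V) (A B : Set V)
    (h : (A ∩ B).Finite) : Prop :=
  f h.toFinset ⊆ B \ A

/-- A finite order separation `(A,B)` points away from the vertex-direction `f`. -/
def PointsAway (D : V → V → Prop) (f : Finset V → Set V) (A B : Set V)
    (h : (A ∩ B).Finite) : Prop :=
  f h.toFinset ⊆ A \ B

/-- The vertex `v` dominates the vertex-direction `f`. -/
def DomDir (D : V → V → Prop) (v : V) (f : Finset V → Set V) : Prop :=
  ∀ A B, IsSep D A B → ∀ h : (A ∩ B).Finite, PointsAway D f A B h → v ∈ A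

/-- An infinite `v`–`B` fan: infinitely many `v`–`B` paths meeting pairwise precisely in `v`. -/
def Fan (D : V → V → Prop) (v : V) (B : Set V) : Prop :=
  ∃ P : ℕ → List V,
    (∀ k, IsPathList D (P k)) ∧
    (∀ k, (P k).head? = some v) ∧
    (∀ k, 2 ≤ (P k).length) ∧
    (∀ k, ∃ b, (P k).getLast? = some b ∧ b ∈ B) ∧
    (∀ k, ∀ x ∈ (P k).dropLast, x ∉ B) ∧
    (∀ j k, j ≠ k → ∀ x ∈ (P j).tail, x ∉ (P k).tail)

/-- Limit edge between the ends of the solid rays `R` and `R'`. -/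
def LimitEdgeEE (D : V → V → Prop) (R R' : ℕ → V) : Prop :=
  ∀ (X : Finset V) C C', IsSCCIn D ((↑X : Set V)ᶜ) C → HasTailIn R C →
    IsSCCIn D ((↑X : Set V)ᶜ) C' → HasTailIn R' C' → C ≠ C' →
    ∃ a ∈ C, ∃ b ∈ C', D a b

/-- Limit edge from the vertex `v` to the end of the solid ray `R`. -/
def LimitEdgeVE (D : V → V → Prop) (v : V) (R : ℕ → V) : Prop :=
  ∀ (X : Finset V) C, IsSCCIn D ((↑X : Set V)ᶜ) C → HasTailIn R C → v ∉ C →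
    ∃ b ∈ C, D v b

/-- Limit edge from the end of the solid ray `R` to the vertex `v`. -/
def LimitEdgeEV (D : V → V → Prop) (R : ℕ → V) (v : V) : Prop :=
  ∀ (X : Finset V) C, IsSCCIn D ((↑X : Set V)ᶜ) C → HasTailIn R C → v ∉ C →
    ∃ a ∈ C, D a v

/-- A subdivided infinite out-star in `D` with centre `c`, given by its paths. -/
def IsStar (D : V → V → Prop) (c : V) (P : ℕ → List V) : Prop :=
  (∀ k, IsPathList D (P k)) ∧ (∀ k, (P k).head? = some c) ∧
  (∀ k, 2 ≤ (P k).length) ∧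
  (∀ j k, j ≠ k → ∀ x ∈ (P j).tail, x ∉ (P k).tail)

/-- A directed comb in `D` with spine `R`, given by its (pairwise disjoint) paths each meeting
`R` precisely in its first vertex. -/
def IsComb (D : V → V → Prop) (R : ℕ → V) (P : ℕ → List V) : Prop :=
  IsRay D R ∧ (∀ k, IsPathList D (P k)) ∧
  (∀ k, ∃ n, (P k).head? = some (R n)) ∧
  (∀ k, ∀ x ∈ (P k).tail, ∀ n, x ≠ R n) ∧
  (∀ j k, j ≠ k → ∀ x ∈ P j, x ∉ P k)

/-- A star in `D` whose `k`-th leaf is `a k`. -/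
def StarAttachedWith (D : V → V → Prop) (a : ℕ → V) : Prop :=
  ∃ c P, IsStar D c P ∧ ∀ k, (P k).getLast? = some (a k)

/-- A comb in `D` whose `k`-th tooth is `a k`. -/
def CombAttachedWith (D : V → V → Prop) (a : ℕ → V) : Prop :=
  ∃ R P, IsComb D R P ∧ ∀ k, (P k).getLast? = some (a k)

/-- `a` and `b` are consecutive entries of the list `l`. -/
def AdjInList (l : List V) (a b : V) : Prop :=
  ∃ l₁ l₂, l = l₁ ++ a :: b :: l₂

/-- The edge relation of (a subdigraph of `D` forming) the necklace `N`: all `D`-edges inside a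
bead together with the edges of the connecting paths. -/
def Necklace.edges {D : V → V → Prop} (N : Necklace D) (a b : V) : Prop :=
  D a b ∧ ((∃ n, a ∈ N.bead n ∧ b ∈ N.bead n) ∨
    (∃ n, AdjInList (N.fwd n) a b ∨ AdjInList (N.bwd n) a b))

/-- A generalized ray: a directed ray (`true`) or a reverse directed ray (`false`). -/
def IsGenRay (D : V → V → Prop) : Bool × (ℕ → V) → Prop
  | (true, R) => IsRay D R
  | (false, R) => IsRevRay D R

/-- Pre-end equivalence of generalized rays: infinitely many disjoint paths in both
directions. -/
def PreEquiv (D : V → V → Prop) (Q Q' : Bool × (ℕ → V)) : Prop :=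
  DisjointPathsFrom D (Set.range Q.2) (Set.range Q'.2) ∧
  DisjointPathsFrom D (Set.range Q'.2) (Set.range Q.2)

/-- The pre-end `γ` includes the end represented by the solid ray `R`. -/
def IncludesEnd (D : V → V → Prop) (γ : Set (Bool × (ℕ → V))) (R : ℕ → V) : Prop :=
  Solid D R ∧ ∀ R', Solid D R' → EndEquiv D R R' → (true, R') ∈ γ

/-- The set of edges of `D` from `A` to `B`. -/
def EdgesBetween (D : V → V → Prop) (A B : Set V) : Set (V × V) :=
  {e | D e.1 e.2 ∧ e.1 ∈ A ∧ e.2 ∈ B}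

/-- A bundle of `D − X`. -/
def IsBundle (D : V → V → Prop) (X : Finset V) (E : Set (V × V)) : Prop :=
  E.Nonempty ∧
  ((∃ C C', IsSCCIn D ((↑X : Set V)ᶜ) C ∧ IsSCCIn D ((↑X : Set V)ᶜ) C' ∧ C ≠ C' ∧
      E = EdgesBetween D C C') ∨
   (∃ v ∈ X, ∃ C, IsSCCIn D ((↑X : Set V)ᶜ) C ∧
      (E = EdgesBetween D {v} C ∨ E = EdgesBetween D C {v})))

/-- Compatibility `f(X) ⊇ f(Y)` between values of a direction (a strong component is regarded
as containing a bundle if it contains all its edges). -/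
def DirCompat : Set V ⊕ Set (V × V) → Set V ⊕ Set (V × V) → Prop
  | Sum.inl C, Sum.inl C' => C' ⊆ C
  | Sum.inl C, Sum.inr E' => ∀ e ∈ E', e.1 ∈ C ∧ e.2 ∈ C
  | Sum.inr _, Sum.inl _ => False
  | Sum.inr E, Sum.inr E' => E' ⊆ E

/-- A direction of `D`: maps each finite `X` to a strong component or a bundle of `D − X`,
compatibly. -/
def IsDirection (D : V → V → Prop) (f : Finset V → Set V ⊕ Set (V × V)) : Prop :=
  (∀ X : Finset V, (∃ C, IsSCCIn D ((↑X : Set V)ᶜ) C ∧ f X = Sum.inl C) ∨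
    (∃ E, IsBundle D X E ∧ f X = Sum.inr E)) ∧
  ∀ X Y : Finset V, X ⊆ Y → DirCompat (f X) (f Y)

/-- An edge-direction: a direction whose value is a bundle for some finite `X`. -/
def IsEdgeDirection (D : V → V → Prop) (f : Finset V → Set V ⊕ Set (V × V)) : Prop :=
  IsDirection D f ∧ ∃ (X : Finset V) (E : Set (V × V)), f X = Sum.inr E

/-- The three kinds of (potential) limit edges: end–end, vertex–end, end–vertex.
Ends are given as sets of (solid) rays. -/
inductive LimitEdgeObj (V : Type*) where
  | ee (Ω₁ Ω₂ : Set (ℕ → V))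
  | ve (v : V) (Ω : Set (ℕ → V))
  | ev (Ω : Set (ℕ → V)) (v : V)

/-- `l` is a limit edge of `D`. -/
def IsLimitEdge (D : V → V → Prop) : LimitEdgeObj V → Prop
  | LimitEdgeObj.ee Ω₁ Ω₂ => IsEnd D Ω₁ ∧ IsEnd D Ω₂ ∧ Ω₁ ≠ Ω₂ ∧
      ∀ R ∈ Ω₁, ∀ R' ∈ Ω₂, LimitEdgeEE D R R'
  | LimitEdgeObj.ve v Ω => IsEnd D Ω ∧ ∀ R ∈ Ω, LimitEdgeVE D v R
  | LimitEdgeObj.ev Ω v => IsEnd D Ω ∧ ∀ R ∈ Ω, LimitEdgeEV D R v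

/-- `f` agrees with the map `f_λ` for the end–end limit edge `Ω₁Ω₂`. -/
def AgreesEE (D : V → V → Prop) (Ω₁ Ω₂ : Set (ℕ → V))
    (f : Finset V → Set V ⊕ Set (V × V)) : Prop :=
  ∀ (X : Finset V), ∀ R ∈ Ω₁, ∀ R' ∈ Ω₂, ∀ C C',
    IsSCCIn D ((↑X : Set V)ᶜ) C → HasTailIn R C →
    IsSCCIn D ((↑X : Set V)ᶜ) C' → HasTailIn R' C' →
    (C = C' → f X = Sum.inl C) ∧ (C ≠ C' → f X = Sum.inr (EdgesBetween D C C'))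

/-- `f` agrees with the map `f_λ` for the vertex–end limit edge `vΩ`. -/
def AgreesVE (D : V → V → Prop) (v : V) (Ω : Set (ℕ → V))
    (f : Finset V → Set V ⊕ Set (V × V)) : Prop :=
  ∀ (X : Finset V), ∀ R ∈ Ω, ∀ C, IsSCCIn D ((↑X : Set V)ᶜ) C → HasTailIn R C →
    (v ∈ C → f X = Sum.inl C) ∧
    (v ∈ (↑X : Set V) → f X = Sum.inr (EdgesBetween D {v} C)) ∧
    (∀ C', IsSCCIn D ((↑X : Set V)ᶜ) C' → v ∈ C' → C' ≠ C →
      f X = Sum.inr (EdgesBetween D C' C))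

/-- `f` agrees with the map `f_λ` for the end–vertex limit edge `Ωv`. -/
def AgreesEV (D : V → V → Prop) (Ω : Set (ℕ → V)) (v : V)
    (f : Finset V → Set V ⊕ Set (V × V)) : Prop :=
  ∀ (X : Finset V), ∀ R ∈ Ω, ∀ C, IsSCCIn D ((↑X : Set V)ᶜ) C → HasTailIn R C →
    (v ∈ C → f X = Sum.inl C) ∧
    (v ∈ (↑X : Set V) → f X = Sum.inr (EdgesBetween D C {v})) ∧
    (∀ C', IsSCCIn D ((↑X : Set V)ᶜ) C' → v ∈ C' → C' ≠ C →
      f X = Sum.inr (EdgesBetween D C C'))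

/-- `f` agrees with `f_λ` for the limit edge `l`. -/
def Agrees (D : V → V → Prop) : LimitEdgeObj V → (Finset V → Set V ⊕ Set (V × V)) → Prop
  | LimitEdgeObj.ee Ω₁ Ω₂, f => AgreesEE D Ω₁ Ω₂ f
  | LimitEdgeObj.ve v Ω, f => AgreesVE D v Ω f
  | LimitEdgeObj.ev Ω v, f => AgreesEV D Ω v f

/-!
Delete a finite set `X`; the rays `R` and `R'` are injective, so they have tails in `D − X`.
Among infinitely many disjoint `R`–`R'` paths, one avoids `X` and any two given initial
segments; hence from every late vertex of `R` one can walk forward along `R`, cross to an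
arbitrarily late vertex of `R'`, and walk back along `R'` to any prescribed late vertex
of `R'`. A single `R'`–`R` path from `R' a` to `R b` avoiding `X` provides the way back:
`R' j → R' a → R b → R i` for `j ≥ a`, `i ≥ b`. So all late vertices of `R` and `R'` lie
in the strong component of `R b` in `D − X`.
-/

open Filter

section Reachability

variable {D : V → V → Prop} {S : Set V}

theorem ReachIn.trans {a b c : V} (hab : ReachIn D S a b) (hbc : ReachIn D S b c) :
    ReachIn D S a c :=
  ⟨hab.1, hbc.2.1, hab.2.2.trans hbc.2.2⟩

theorem IsPathList.reachIn {l : List V} {a b : V} (hl : IsPathList D l)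
    (ha : l.head? = some a) (hb : l.getLast? = some b) (hS : ∀ x ∈ l, x ∈ S) :
    ReachIn D S a b := by
  obtain ⟨hne, -, hchain⟩ := hl
  have hchainS : l.IsChain (fun x y => y ∈ S ∧ D x y) :=
    hchain.imp_of_mem_imp fun _ y _ hy hxy => ⟨hS y hy, hxy⟩
  have hreach := List.relationReflTransGen_of_exists_isChain l hchainS hne
  rw [(List.head_eq_iff_head?_eq_some hne).2 ha,
    (List.getLast_eq_iff_getLast?_eq_some hne).2 hb] at hreach
  exact ⟨hS a (List.mem_of_mem_head? ha), hS b (List.mem_of_mem_getLast? hb), hreach⟩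

theorem reachIn_of_adj_succ {R : ℕ → V} (hR : ∀ k, D (R k) (R (k + 1))) {n i j : ℕ}
    (hS : ∀ k ≥ n, R k ∈ S) (hni : n ≤ i) (hij : i ≤ j) : ReachIn D S (R i) (R j) :=
  ⟨hS i hni, hS j (hni.trans hij),
    Relation.ReflTransGen.lift R (fun _ _ h => h) _ _ <|
      reflTransGen_of_succ_of_le (fun k l => R l ∈ S ∧ D (R k) (R l))
        (fun k hk => ⟨hS _ ((hni.trans hk.1).trans k.le_succ), hR k⟩) hij⟩

theorem reachIn_of_adj_succ_rev {R : ℕ → V} (hR : ∀ k, D (R (k + 1)) (R k)) {n i j : ℕ}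
    (hS : ∀ k ≥ n, R k ∈ S) (hni : n ≤ i) (hij : i ≤ j) : ReachIn D S (R j) (R i) :=
  ⟨hS j (hni.trans hij), hS i hni,
    Relation.ReflTransGen.lift R (fun _ _ h => h) _ _ <|
      reflTransGen_of_succ_of_ge (fun k l => R l ∈ S ∧ D (R k) (R l))
        (fun k hk => ⟨hS k (hni.trans hk.1), hR k⟩) hij⟩

end Reachability

theorem exists_forall_ge_mem_of_injective {R : ℕ → V} (hR : Function.Injective R) {S : Set V}
    (hS : Sᶜ.Finite) : ∃ n, ∀ k ≥ n, R k ∈ S :=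
  eventually_atTop.1 <| Nat.cofinite_eq_atTop ▸
    hR.tendsto_cofinite (by simpa using hS.compl_mem_cofinite)

theorem exists_forall_notMem_of_pairwise_disjoint {P : ℕ → List V}
    (hP : ∀ j k, j ≠ k → ∀ x ∈ P j, x ∉ P k) {F : Set V} (hF : F.Finite) :
    ∃ k, ∀ x ∈ P k, x ∉ F := by
  by_contra! h
  choose x hxP hxF using h
  have hx : Function.Injective x := fun j k hjk =>
    by_contra fun hne => hP j k hne _ (hxP j) (hjk ▸ hxP k)
  exact (Set.infinite_range_of_injective hx) (hF.subset (Set.range_subset_iff.2 hxF))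

theorem exists_le_apply_eq_of_notMem_image_Iio {A : ℕ → V} {x : V} (hx : x ∈ Set.range A)
    {m : ℕ} (hxm : x ∉ A '' Set.Iio m) : ∃ i ≥ m, A i = x := by
  obtain ⟨i, rfl⟩ := hx
  exact ⟨i, not_lt.1 fun hi => hxm ⟨i, hi, rfl⟩, rfl⟩

theorem DisjointPathsFrom.exists_reachIn {D : V → V → Prop} {A B : ℕ → V} {S : Set V}
    (h : DisjointPathsFrom D (Set.range A) (Set.range B)) (hS : Sᶜ.Finite) (m n : ℕ) :
    ∃ i ≥ m, ∃ j ≥ n, ReachIn D S (A i) (B j) := by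
  obtain ⟨P, hPpath, hPdisj, hPhead, hPlast, -, -⟩ := h
  obtain ⟨k, hk⟩ := exists_forall_notMem_of_pairwise_disjoint hPdisj
    ((hS.union ((Set.finite_Iio m).image A)).union ((Set.finite_Iio n).image B))
  obtain ⟨a, ha, haA⟩ := hPhead k
  obtain ⟨b, hb, hbB⟩ := hPlast k
  obtain ⟨i, hi, rfl⟩ := exists_le_apply_eq_of_notMem_image_Iio haA
    fun h => hk a (List.mem_of_mem_head? ha) (Or.inl (Or.inr h))
  obtain ⟨j, hj, rfl⟩ := exists_le_apply_eq_of_notMem_image_Iio hbB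
    fun h => hk b (List.mem_of_mem_getLast? hb) (Or.inr h)
  exact ⟨i, hi, j, hj, (hPpath k).reachIn ha hb fun x hx => not_not.1 fun hxS =>
    hk x hx (Or.inl (Or.inl hxS))⟩

/-- A ray equivalent to a reverse ray is solid; moreover, for every finite `X` their tails lie
in a common strong component of `D − X`. -/
theorem equivalent_ray_revray_solid (D : V → V → Prop) (R R' : ℕ → V)
    (hR : IsRay D R) (hR' : IsRevRay D R')
    (h₁ : DisjointPathsFrom D (Set.range R) (Set.range R'))
    (h₂ : DisjointPathsFrom D (Set.range R') (Set.range R)) :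
    ∀ X : Finset V, ∃ C, IsSCCIn D ((↑X : Set V)ᶜ) C ∧ HasTailIn R C ∧ HasTailIn R' C := by
  intro X
  set S : Set V := (↑X : Set V)ᶜ
  have hS : Sᶜ.Finite := by simp [S]
  obtain ⟨n₀, hRS⟩ := exists_forall_ge_mem_of_injective hR.1 hS
  obtain ⟨n₁, hR'S⟩ := exists_forall_ge_mem_of_injective hR'.1 hS
  have forward : ∀ i ≥ n₀, ∀ j ≥ n₁, ReachIn D S (R i) (R' j) := by
    intro i hi j hj
    obtain ⟨c, hc, d, hd, hcd⟩ := h₁.exists_reachIn hS i j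
    exact ((reachIn_of_adj_succ hR.2 hRS hi hc).trans hcd).trans
      (reachIn_of_adj_succ_rev hR'.2 hR'S hj hd)
  obtain ⟨a, ha, b, hb, hab⟩ := h₂.exists_reachIn hS n₁ n₀
  have backward : ∀ i ≥ b, ∀ j ≥ a, ReachIn D S (R' j) (R i) := fun i hi j hj =>
    ((reachIn_of_adj_succ_rev hR'.2 hR'S ha hj).trans hab).trans
      (reachIn_of_adj_succ hR.2 hRS hb hi)
  refine ⟨{x | ReachIn D S (R b) x ∧ ReachIn D S x (R b)}, ⟨R b, hRS b hb, rfl⟩,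
    ⟨b, fun i hi => ?_⟩, ⟨a, fun j hj => ?_⟩⟩
  · exact ⟨(forward b hb a ha).trans (backward i hi a le_rfl),
      (forward i (hb.trans hi) a ha).trans (backward b le_rfl a le_rfl)⟩
  · exact ⟨forward b hb j (ha.trans hj), backward b le_rfl j hj⟩
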